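/- arXiv:2510.25777 — 4 statements merged into one kernel-verified Lean document; each statement's English description precedes it below -/
import Mathlib

section
/- Lemma 1 (positivity of solutions): Let S_H, E_H, I_H, R_H, S_F, E_F, I_F, S_D, E_D, I_D, R_D, M be a solution of the rabies model on [0, ∞) with S_H(0) > 0, S_F(0) > 0, S_D(0) ≥ 0, and E_H(0), I_H(0), R_H(0), E_F(0), I_F(0), E_D(0), I_D(0), R_D(0), M(0) all nonnegative. Then for every t ≥ 0: S_H(t) > 0, S_F(t) > 0, and E_H(t), I_H(t), R_H(t), E_F(t), I_F(t), S_D(t), E_D(t), I_D(t), R_D(t), M(t) are all nonnegative. -/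
/-!
Write `x = (S_H, …, M)` and `N(t) = Σ j, (x j t)⁻` for its total negative part. Near every point
of the nonnegative orthant the model's vector field `F` satisfies `-F i y ≤ K * Σ j, (y j)⁻`
whenever `y i ≤ 0`: each term of `F i` that can be negative there either carries the factor
`y i` or is a product of bounded factors that are themselves dominated by negative parts, and
`M / (M + C)` stays bounded because `M + C ≥ C / 2` near the orthant. Hence the right Dini
derivative of `N` is at most a multiple of `N`, so by Gronwall's inequality `N`, which vanishes
at the start, vanishes on a short interval; a continuation argument gives `x t ≥ 0` for all
`t ≥ 0`. After that, `S_H' ≥ -(μ1 + τ1 I_F + τ2 I_D + τ3 λ(M)) S_H` with a coefficient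
continuous in time, so `S_H` stays above a decaying exponential, and likewise `S_F`.
-/

open Set Filter Topology

theorem neg_mul_le_negPart_mul_abs_add_abs_mul_negPart (a b : ℝ) :
    -(a * b) ≤ a⁻ * |b| + |a| * b⁻ := by
  rcases le_total 0 a with ha | ha <;> rcases le_total 0 b with hb | hb <;>
    simp only [negPart_eq_zero.2, negPart_eq_neg.2, abs_of_nonneg, abs_of_nonpos, ha, hb] <;>
    nlinarith

theorem exists_tendsto_slope_negPart {f : ℝ → ℝ} {f' t : ℝ}
    (hf : HasDerivWithinAt f f' (Ici t) t) :
    ∃ L ≤ (if f t ≤ 0 then f'⁻ else 0), Tendsto (slope (fun s => (f s)⁻) t) (𝓝[>] t) (𝓝 L) := by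
  have hslope : Tendsto (slope f t) (𝓝[>] t) (𝓝 f') :=
    (hasDerivWithinAt_iff_tendsto_slope' (lt_irrefl t)).1 hf.Ioi_of_Ici
  have hcont : Tendsto f (𝓝[>] t) (𝓝 (f t)) :=
    hf.continuousWithinAt.tendsto.mono_left (nhdsWithin_mono _ Ioi_subset_Ici_self)
  rcases lt_trichotomy (f t) 0 with hneg | hzero | hpos
  · refine ⟨-f', by simp [hneg.le, neg_le_negPart], hslope.neg.congr' ?_⟩
    filter_upwards [hcont.eventually (gt_mem_nhds hneg)] with s hs
    simp only [slope, vsub_eq_sub, smul_eq_mul, negPart_eq_neg.2 hs.le, negPart_eq_neg.2 hneg.le]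
    ring
  · refine ⟨f'⁻, by simp [hzero], ((continuous_negPart.tendsto f').comp hslope).congr' ?_⟩
    filter_upwards [self_mem_nhdsWithin] with s (hs : t < s)
    simp only [Function.comp, slope, vsub_eq_sub, smul_eq_mul, hzero, sub_zero, negPart_def,
      neg_zero, max_self, mul_max_of_nonneg _ _ (inv_nonneg.2 (sub_nonneg.2 hs.le)), mul_neg,
      mul_zero]
  · refine ⟨0, by simp [hpos.not_ge], tendsto_const_nhds.congr' ?_⟩
    filter_upwards [hcont.eventually (lt_mem_nhds hpos)] with s hs
    simp [slope, negPart_eq_zero.2 hs.le, negPart_eq_zero.2 hpos.le]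

theorem pos_of_neg_mul_le_deriv {f f' q : ℝ → ℝ} {a : ℝ}
    (hf : ∀ t ∈ Ici a, HasDerivWithinAt f (f' t) (Ici a) t) (hq : ContinuousOn q (Ici a))
    (hnn : ∀ t ∈ Ici a, 0 ≤ f t) (hf' : ∀ t ∈ Ici a, -(q t * f t) ≤ f' t) (ha : 0 < f a) :
    ∀ t ∈ Ici a, 0 < f t := by
  intro b hb
  obtain ⟨K, hK⟩ := isCompact_Icc.exists_bound_of_continuousOn (hq.mono Icc_subset_Ici_self)
  have hgron := le_gronwallBound_of_liminf_deriv_right_le (f := fun t => -f t)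
    (f' := fun t => -f' t) (δ := -f a) (K := -K) (ε := 0) (a := a) (b := b)
    (fun t ht => ((hf t ht.1).continuousWithinAt.mono Icc_subset_Ici_self).neg)
    (fun t ht _ hr => ((hf t ht.1).neg.mono (Ici_subset_Ici.2 ht.1)).liminf_right_slope_le hr)
    le_rfl ?_ b ⟨hb, le_rfl⟩
  · rw [gronwallBound_ε0] at hgron
    nlinarith [Real.exp_pos (-K * (b - a))]
  · intro t ht
    have hqK : q t ≤ K := (le_abs_self _).trans (hK t (Ico_subset_Icc_self ht))
    nlinarith [hf' t ht.1, mul_le_mul_of_nonneg_right hqK (hnn t ht.1)]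

section

variable {ι : Type*} [Fintype ι]

def negPartSum (y : ι → ℝ) : ℝ := ∑ j, (y j)⁻

theorem negPartSum_nonneg (y : ι → ℝ) : 0 ≤ negPartSum y :=
  Finset.sum_nonneg fun j _ => negPart_nonneg (y j)

theorem negPart_le_negPartSum (y : ι → ℝ) (j : ι) : (y j)⁻ ≤ negPartSum y :=
  Finset.single_le_sum (f := fun j => (y j)⁻) (fun _ _ => negPart_nonneg _) (Finset.mem_univ j)

theorem negPartSum_eq_zero {y : ι → ℝ} (hy : 0 ≤ y) : negPartSum y = 0 :=
  Finset.sum_eq_zero fun j _ => negPart_eq_zero.2 (hy j)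

theorem nonneg_of_neg_deriv_le_negPartSum {x v : ℝ → ι → ℝ} {a b K : ℝ} (hK : 0 ≤ K)
    (hx : ∀ t ∈ Icc a b, ∀ i, HasDerivWithinAt (fun s => x s i) (v t i) (Ici a) t)
    (ha : 0 ≤ x a)
    (hv : ∀ t ∈ Ico a b, ∀ i, x t i ≤ 0 → -v t i ≤ K * negPartSum (x t)) :
    ∀ t ∈ Icc a b, 0 ≤ x t := by
  have hN : ∀ t ∈ Icc a b,
      negPartSum (x t) ≤ gronwallBound 0 (Fintype.card ι * K) 0 (t - a) := by
    refine le_gronwallBound_of_liminf_deriv_right_le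
      (f' := fun t => ∑ i, if x t i ≤ 0 then (v t i)⁻ else 0) ?_ ?_ (negPartSum_eq_zero ha).le ?_
    · exact continuousOn_finsetSum _ fun i _ => continuous_negPart.comp_continuousOn
        fun t ht => (hx t ht i).continuousWithinAt.mono Icc_subset_Ici_self
    · intro t ht r hr
      choose L hL htends using fun i =>
        exists_tendsto_slope_negPart
          ((hx t (Ico_subset_Icc_self ht) i).mono (Ici_subset_Ici.2 ht.1))
      have hsum : Tendsto (fun z => (z - t)⁻¹ * (negPartSum (x z) - negPartSum (x t))) (𝓝[>] t)
          (𝓝 (∑ i, L i)) := by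
        refine (tendsto_finsetSum _ fun i _ => htends i).congr fun z => ?_
        rw [negPartSum, negPartSum, ← Finset.sum_sub_distrib, Finset.mul_sum]
        rfl
      exact (hsum.eventually
        (gt_mem_nhds ((Finset.sum_le_sum fun i _ => hL i).trans_lt hr))).frequently
    · intro t ht
      have hKN := mul_nonneg hK (negPartSum_nonneg (x t))
      calc (∑ i, if x t i ≤ 0 then (v t i)⁻ else 0) ≤ ∑ _i : ι, K * negPartSum (x t) := by
            refine Finset.sum_le_sum fun i _ => ?_
            split_ifs with hi
            · exact max_le (hv t ht i hi) hKN
            · exact hKN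
        _ = Fintype.card ι * K * negPartSum (x t) + 0 := by simp [mul_assoc]
  intro t ht i
  have h := (negPart_le_negPartSum (x t) i).trans ((hN t ht).trans_eq (gronwallBound_ε0_δ0 _ _))
  exact neg_nonpos.1 ((neg_le_negPart _).trans h)

def IsNegPartDominated (S : Set (ι → ℝ)) (g : (ι → ℝ) → ℝ) : Prop :=
  ∃ K, 0 ≤ K ∧ ∀ y ∈ S, -g y ≤ K * negPartSum y

/-- A quantitative, local form of quasi-positivity (`F i y ≥ 0` whenever `y ≥ 0` and `y i = 0`),
as needed for Gronwall's inequality. -/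
def QuasiPositive (F : (ι → ℝ) → ι → ℝ) : Prop :=
  ∀ y, 0 ≤ y → ∃ S ∈ 𝓝 y, ∀ i, IsNegPartDominated (S ∩ {z | z i ≤ 0}) (fun z => F z i)

theorem QuasiPositive.nonneg_of_hasDerivWithinAt {F : (ι → ℝ) → ι → ℝ} (hF : QuasiPositive F)
    {x : ℝ → ι → ℝ} {a : ℝ}
    (hx : ∀ i, ∀ t ∈ Ici a, HasDerivWithinAt (fun s => x s i) (F (x t) i) (Ici a) t)
    (ha : 0 ≤ x a) : ∀ t ∈ Ici a, 0 ≤ x t := by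
  have hcont : ContinuousOn x (Ici a) := fun t ht =>
    continuousWithinAt_pi.2 fun i => (hx i t ht).continuousWithinAt
  intro b hb
  suffices Icc a b ⊆ {t | 0 ≤ x t} from this ⟨hb, le_rfl⟩
  refine IsClosed.Icc_subset_of_forall_mem_nhdsWithin ?_ ha ?_
  · rw [inter_comm]
    exact (hcont.mono Icc_subset_Ici_self).preimage_isClosed_of_isClosed isClosed_Icc isClosed_Ici
  · rintro T ⟨hT, haT, -⟩
    obtain ⟨S, hS, hdom⟩ := hF _ hT
    choose K hK hKS using hdom
    have hxS : ∀ᶠ t in 𝓝[≥] T, x t ∈ S :=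
      ((hcont T haT).tendsto.mono_left (nhdsWithin_mono _ (Ici_subset_Ici.2 haT))).eventually hS
    obtain ⟨c, hTc, hsub⟩ := mem_nhdsGE_iff_exists_Ico_subset.1 hxS
    have hnn := nonneg_of_neg_deriv_le_negPartSum (b := c)
      (Finset.sum_nonneg fun i _ => hK i : 0 ≤ ∑ i, K i)
      (fun t ht i => (hx i t (haT.trans ht.1)).mono (Ici_subset_Ici.2 haT)) hT
      fun t ht i hi => (hKS i (x t) ⟨hsub ht, hi⟩).trans (mul_le_mul_of_nonneg_right
        (Finset.single_le_sum (fun j _ => hK j) (Finset.mem_univ i)) (negPartSum_nonneg _))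
    filter_upwards [Ioo_mem_nhdsGT hTc] with t ht using hnn t (Ioo_subset_Icc_self ht)

namespace IsNegPartDominated

variable {S : Set (ι → ℝ)} {g h : (ι → ℝ) → ℝ}

theorem of_nonneg (hg : ∀ y ∈ S, 0 ≤ g y) : IsNegPartDominated S g :=
  ⟨0, le_rfl, fun y hy => by simpa using hg y hy⟩

theorem apply (j : ι) : IsNegPartDominated S (fun y => y j) :=
  ⟨1, zero_le_one, fun y _ => by
    simpa using (neg_le_negPart (y j)).trans (negPart_le_negPartSum y j)⟩

theorem add (hg : IsNegPartDominated S g) (hh : IsNegPartDominated S h) :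
    IsNegPartDominated S (fun y => g y + h y) := by
  obtain ⟨K, hK, hKg⟩ := hg
  obtain ⟨L, hL, hLh⟩ := hh
  exact ⟨K + L, add_nonneg hK hL, fun y hy => by linarith [hKg y hy, hLh y hy]⟩

theorem const_mul (hg : IsNegPartDominated S g) {c : ℝ} (hc : 0 ≤ c) :
    IsNegPartDominated S (fun y => c * g y) := by
  obtain ⟨K, hK, hKg⟩ := hg
  exact ⟨c * K, mul_nonneg hc hK, fun y hy => by
    nlinarith [mul_le_mul_of_nonneg_left (hKg y hy) hc]⟩

theorem div_const (hg : IsNegPartDominated S g) {c : ℝ} (hc : 0 ≤ c) :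
    IsNegPartDominated S (fun y => g y / c) := by
  obtain ⟨K, hK, hKg⟩ := hg
  refine ⟨K / c, div_nonneg hK hc, fun y hy => ?_⟩
  rw [← neg_div, div_mul_eq_mul_div]
  exact div_le_div_of_nonneg_right (hKg y hy) hc

theorem mul (hg : IsNegPartDominated S g) (hh : IsNegPartDominated S h)
    (hgB : ∃ B, ∀ y ∈ S, |g y| ≤ B) (hhB : ∃ B, ∀ y ∈ S, |h y| ≤ B) :
    IsNegPartDominated S (fun y => g y * h y) := by
  obtain ⟨K, hK, hKg⟩ := hg
  obtain ⟨L, hL, hLh⟩ := hh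
  obtain ⟨Bg, hBg⟩ := hgB
  obtain ⟨Bh, hBh⟩ := hhB
  refine ⟨K * |Bh| + |Bg| * L, by positivity, fun y hy => ?_⟩
  have hN := negPartSum_nonneg y
  have hg' : (g y)⁻ ≤ K * negPartSum y := max_le (hKg y hy) (mul_nonneg hK hN)
  have hh' : (h y)⁻ ≤ L * negPartSum y := max_le (hLh y hy) (mul_nonneg hL hN)
  have hgb : |g y| ≤ |Bg| := (hBg y hy).trans (le_abs_self _)
  have hhb : |h y| ≤ |Bh| := (hBh y hy).trans (le_abs_self _)
  calc -(g y * h y) ≤ (g y)⁻ * |h y| + |g y| * (h y)⁻ :=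
        neg_mul_le_negPart_mul_abs_add_abs_mul_negPart _ _
    _ ≤ K * negPartSum y * |Bh| + |Bg| * (L * negPartSum y) := by
        gcongr
    _ = (K * |Bh| + |Bg| * L) * negPartSum y := by ring

theorem sub_mul_apply (hg : IsNegPartDominated S g) (hhB : ∃ B, ∀ y ∈ S, |h y| ≤ B) {j : ι}
    (hj : ∀ y ∈ S, y j ≤ 0) : IsNegPartDominated S (fun y => g y - h y * y j) := by
  obtain ⟨K, hK, hKg⟩ := hg
  obtain ⟨B, hB⟩ := hhB
  refine ⟨K + |B|, by positivity, fun y hy => ?_⟩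
  have hyj : (y j)⁻ = -y j := negPart_eq_neg.2 (hj y hy)
  have hhyj : h y * y j ≤ |B| * negPartSum y := calc
    h y * y j ≤ |h y| * (y j)⁻ := by
      rw [hyj]; nlinarith [neg_abs_le (h y), hj y hy]
    _ ≤ |B| * negPartSum y := mul_le_mul ((hB y hy).trans (le_abs_self _))
      (negPart_le_negPartSum y j) (negPart_nonneg _) (abs_nonneg _)
  linarith [hKg y hy]

theorem div_add_const {j : ι} {c C : ℝ} (hc : 0 < c) (hC : ∀ y ∈ S, c ≤ y j + C) :
    IsNegPartDominated S (fun y => y j / (y j + C)) := by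
  refine ⟨c⁻¹, by positivity, fun y hy => ?_⟩
  have hpos : 0 < y j + C := hc.trans_le (hC y hy)
  rcases le_total 0 (y j) with hj | hj
  · have := div_nonneg hj hpos.le
    nlinarith [negPartSum_nonneg y, inv_pos.2 hc]
  · calc -(y j / (y j + C)) = -y j / (y j + C) := by rw [neg_div]
      _ ≤ -y j / c := div_le_div_of_nonneg_left (by linarith) hc (hC y hy)
      _ ≤ c⁻¹ * negPartSum y := by
        rw [div_eq_inv_mul]
        gcongr
        exact (neg_le_negPart _).trans (negPart_le_negPartSum y j)

end IsNegPartDominated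

end

structure RabiesParams where
  (θ1 θ2 θ3 τ1 τ2 τ3 β1 β2 β3 μ1 μ2 μ3 μ4 σ1 σ2 σ3 κ1 κ2 κ3 γ γ1 γ2 γ3 ψ1 ψ2 ψ3 ρ1 ρ2 ρ3 ν1 ν2 ν3
    C : ℝ)

noncomputable section

namespace RabiesParams

variable (p : RabiesParams)

structure Admissible : Prop where
  (θ1 : 0 ≤ p.θ1) (θ2 : 0 ≤ p.θ2) (θ3 : 0 ≤ p.θ3)
  (τ1 : 0 ≤ p.τ1) (τ2 : 0 ≤ p.τ2) (τ3 : 0 ≤ p.τ3)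
  (κ1 : 0 ≤ p.κ1) (κ2 : 0 ≤ p.κ2) (κ3 : 0 ≤ p.κ3)
  (ψ1 : 0 ≤ p.ψ1) (ψ2 : 0 ≤ p.ψ2) (ψ3 : 0 ≤ p.ψ3)
  (ρ1 : 0 ≤ p.ρ1) (ρ2 : 0 ≤ p.ρ2) (ρ3 : 0 ≤ p.ρ3)
  (β1 : 0 ≤ p.β1) (β2 : 0 ≤ p.β2) (β3 : 0 ≤ p.β3)
  (γ : 0 ≤ p.γ) (γ1 : 0 ≤ p.γ1) (γ2 : 0 ≤ p.γ2) (γ3 : 0 ≤ p.γ3)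
  (ν1 : 0 ≤ p.ν1) (ν2 : 0 ≤ p.ν2) (ν3 : 0 ≤ p.ν3)
  (C : 0 < p.C)

def forceH (y : Fin 12 → ℝ) : ℝ := p.τ1 * y 6 + p.τ2 * y 9 + p.τ3 * (y 11 / (y 11 + p.C))

def forceF (y : Fin 12 → ℝ) : ℝ := p.κ1 * y 6 + p.κ2 * y 9 + p.κ3 * (y 11 / (y 11 + p.C))

def forceD (y : Fin 12 → ℝ) : ℝ :=
  p.ψ1 * y 6 / (1 + p.ρ1) + p.ψ2 * y 9 / (1 + p.ρ2) + p.ψ3 * (y 11 / (y 11 + p.C)) / (1 + p.ρ3)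

/-- Coordinates are ordered `(S_H, E_H, I_H, R_H, S_F, E_F, I_F, S_D, E_D, I_D, R_D, M)`, and the
paper's incidences are `χ1 = forceH y * y 0`, `χ2 = forceF y * y 4`, `χ3 = forceD y * y 7`. -/
def field (y : Fin 12 → ℝ) : Fin 12 → ℝ := ![
  p.θ1 + p.β3 * y 3 - p.μ1 * y 0 - p.forceH y * y 0,
  p.forceH y * y 0 - (p.μ1 + p.β1 + p.β2) * y 1,
  p.β1 * y 1 - (p.σ1 + p.μ1) * y 2,
  p.β2 * y 1 - (p.β3 + p.μ1) * y 3,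
  p.θ2 - p.forceF y * y 4 - p.μ2 * y 4,
  p.forceF y * y 4 - (p.μ2 + p.γ) * y 5,
  p.γ * y 5 - (p.μ2 + p.σ2) * y 6,
  p.θ3 - p.μ3 * y 7 - p.forceD y * y 7 + p.γ3 * y 10,
  p.forceD y * y 7 - (p.μ3 + p.γ1 + p.γ2) * y 8,
  p.γ1 * y 8 - (p.μ3 + p.σ3) * y 9,
  p.γ2 * y 8 - (p.μ3 + p.γ3) * y 10,
  p.ν1 * y 2 + p.ν2 * y 6 + p.ν3 * y 9 - p.μ4 * y 11]

theorem continuousOn_div_add_C :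
    ContinuousOn (fun y : Fin 12 → ℝ => y 11 / (y 11 + p.C)) {y | y 11 + p.C ≠ 0} :=
  (continuous_apply 11).continuousOn.div (by fun_prop) fun _ h => h

theorem continuousOn_forceH : ContinuousOn p.forceH {y | y 11 + p.C ≠ 0} :=
  (Continuous.continuousOn (by fun_prop)).add (continuousOn_const.mul p.continuousOn_div_add_C)

theorem continuousOn_forceF : ContinuousOn p.forceF {y | y 11 + p.C ≠ 0} :=
  (Continuous.continuousOn (by fun_prop)).add (continuousOn_const.mul p.continuousOn_div_add_C)

theorem continuousOn_forceD : ContinuousOn p.forceD {y | y 11 + p.C ≠ 0} :=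
  (Continuous.continuousOn (by fun_prop)).add
    ((continuousOn_const.mul p.continuousOn_div_add_C).div_const _)

variable {p}

open IsNegPartDominated in
theorem Admissible.quasiPositive_field (hp : p.Admissible) : QuasiPositive p.field := by
  intro y hy
  have hball : ∀ z ∈ Metric.closedBall y (p.C / 2), p.C / 2 ≤ z 11 + p.C := fun z hz => by
    have h11 : 0 ≤ y 11 := hy 11
    have := (abs_le.1 ((Real.dist_eq _ _).symm.trans_le
      ((dist_le_pi_dist z y 11).trans (Metric.mem_closedBall.1 hz)))).1
    linarith
  refine ⟨Metric.closedBall y (p.C / 2), Metric.closedBall_mem_nhds _ (half_pos hp.C), fun i => ?_⟩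
  set S := Metric.closedBall y (p.C / 2) ∩ {z | z i ≤ 0}
  have hi : ∀ z ∈ S, z i ≤ 0 := fun z hz => hz.2
  have hbdd : ∀ g : (Fin 12 → ℝ) → ℝ, ContinuousOn g {z | z 11 + p.C ≠ 0} →
      ∃ B, ∀ z ∈ S, |g z| ≤ B := by
    intro g hg
    obtain ⟨B, hB⟩ := (isCompact_closedBall y (p.C / 2)).exists_bound_of_continuousOn
      (hg.mono fun z hz => (by linarith [hball z hz, hp.C] : 0 < z 11 + p.C).ne')
    exact ⟨B, fun z hz => hB z hz.1⟩
  have hconst : ∀ c : ℝ, ∃ B, ∀ z ∈ S, |c| ≤ B := fun c => ⟨|c|, fun _ _ => le_rfl⟩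
  have hsat : IsNegPartDominated S fun z => z 11 / (z 11 + p.C) :=
    div_add_const (half_pos hp.C) fun z hz => hball z hz.1
  have hH : IsNegPartDominated S p.forceH :=
    (((apply 6).const_mul hp.τ1).add ((apply 9).const_mul hp.τ2)).add (hsat.const_mul hp.τ3)
  have hF : IsNegPartDominated S p.forceF :=
    (((apply 6).const_mul hp.κ1).add ((apply 9).const_mul hp.κ2)).add (hsat.const_mul hp.κ3)
  have hD : IsNegPartDominated S p.forceD :=
    ((((apply 6).const_mul hp.ψ1).div_const (by linarith [hp.ρ1])).add
      (((apply 9).const_mul hp.ψ2).div_const (by linarith [hp.ρ2]))).add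
      ((hsat.const_mul hp.ψ3).div_const (by linarith [hp.ρ3]))
  have hHB := hbdd _ p.continuousOn_forceH
  have hFB := hbdd _ p.continuousOn_forceF
  have hDB := hbdd _ p.continuousOn_forceD
  have happB : ∀ j, ∃ B, ∀ z ∈ S, |z j| ≤ B := fun j => hbdd _ (continuous_apply j).continuousOn
  fin_cases i
  · exact (((of_nonneg fun _ _ => hp.θ1).add ((apply 3).const_mul hp.β3)).sub_mul_apply
      (hconst _) hi).sub_mul_apply hHB hi
  · exact (hH.mul (apply 0) hHB (happB 0)).sub_mul_apply (hconst _) hi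
  · exact ((apply 1).const_mul hp.β1).sub_mul_apply (hconst _) hi
  · exact ((apply 1).const_mul hp.β2).sub_mul_apply (hconst _) hi
  · exact ((of_nonneg fun _ _ => hp.θ2).sub_mul_apply hFB hi).sub_mul_apply (hconst _) hi
  · exact (hF.mul (apply 4) hFB (happB 4)).sub_mul_apply (hconst _) hi
  · exact ((apply 5).const_mul hp.γ).sub_mul_apply (hconst _) hi
  · exact (((of_nonneg fun _ _ => hp.θ3).sub_mul_apply (hconst _) hi).sub_mul_apply hDB hi).add
      ((apply 10).const_mul hp.γ3)
  · exact (hD.mul (apply 7) hDB (happB 7)).sub_mul_apply (hconst _) hi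
  · exact ((apply 8).const_mul hp.γ1).sub_mul_apply (hconst _) hi
  · exact ((apply 8).const_mul hp.γ2).sub_mul_apply (hconst _) hi
  · exact ((((apply 2).const_mul hp.ν1).add ((apply 6).const_mul hp.ν2)).add
      ((apply 9).const_mul hp.ν3)).sub_mul_apply (hconst _) hi

theorem Admissible.susceptibles_pos (hp : p.Admissible) {X : ℝ → Fin 12 → ℝ}
    (hX : ∀ i, ∀ t ∈ Ici (0 : ℝ), HasDerivWithinAt (fun s => X s i) (p.field (X t) i) (Ici 0) t)
    (hnn : ∀ t ∈ Ici (0 : ℝ), 0 ≤ X t) (hSH : 0 < X 0 0) (hSF : 0 < X 0 4) :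
    ∀ t ∈ Ici (0 : ℝ), 0 < X t 0 ∧ 0 < X t 4 := by
  have hcont : ContinuousOn X (Ici 0) := fun t ht =>
    continuousWithinAt_pi.2 fun i => (hX i t ht).continuousWithinAt
  have hmaps : MapsTo X (Ici 0) {y | y 11 + p.C ≠ 0} := fun t ht =>
    (add_pos_of_nonneg_of_pos (hnn t ht 11) hp.C).ne'
  intro t ht
  constructor
  · refine pos_of_neg_mul_le_deriv (q := fun s => p.μ1 + p.forceH (X s)) (hX 0)
      ((continuousOn_const.add p.continuousOn_forceH).comp hcont hmaps) (fun s hs => hnn s hs 0)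
      (fun s hs => ?_) hSH t ht
    change _ ≤ p.θ1 + p.β3 * X s 3 - p.μ1 * X s 0 - p.forceH (X s) * X s 0
    linarith [hp.θ1, mul_nonneg hp.β3 (hnn s hs 3)]
  · refine pos_of_neg_mul_le_deriv (q := fun s => p.μ2 + p.forceF (X s)) (hX 4)
      ((continuousOn_const.add p.continuousOn_forceF).comp hcont hmaps) (fun s hs => hnn s hs 4)
      (fun s hs => ?_) hSF t ht
    change _ ≤ p.θ2 - p.forceF (X s) * X s 4 - p.μ2 * X s 4
    linarith [hp.θ2]

end RabiesParams

end

theorem rabies_positivity_general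
    (θ1 θ2 θ3 τ1 τ2 τ3 β1 β2 β3 μ1 μ2 μ3 μ4 σ1 σ2 σ3 κ1 κ2 κ3 γ γ1 γ2 γ3 ψ1 ψ2 ψ3 ρ1 ρ2 ρ3 ν1 ν2 ν3 C : ℝ)
    (hθ1 : 0 < θ1)
    (hθ2 : 0 < θ2)
    (hθ3 : 0 < θ3)
    (hτ1 : 0 < τ1)
    (hτ2 : 0 < τ2)
    (hτ3 : 0 < τ3)
    (hβ1 : 0 < β1)
    (hβ2 : 0 < β2)
    (hβ3 : 0 < β3)
    (hκ1 : 0 < κ1)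
    (hκ2 : 0 < κ2)
    (hκ3 : 0 < κ3)
    (hγ : 0 < γ)
    (hγ1 : 0 < γ1)
    (hγ2 : 0 < γ2)
    (hγ3 : 0 < γ3)
    (hψ1 : 0 < ψ1)
    (hψ2 : 0 < ψ2)
    (hψ3 : 0 < ψ3)
    (hρ1 : 0 < ρ1)
    (hρ2 : 0 < ρ2)
    (hρ3 : 0 < ρ3)
    (hν1 : 0 < ν1)
    (hν2 : 0 < ν2)
    (hν3 : 0 < ν3)
    (hC : 0 < C)
    (S_H E_H I_H R_H S_F E_F I_F S_D E_D I_D R_D M : ℝ → ℝ)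
    (hodeSH : ∀ t ∈ Set.Ici (0:ℝ), HasDerivWithinAt S_H
        (θ1 + β3 * R_H t - μ1 * S_H t - (τ1 * I_F t + τ2 * I_D t + τ3 * (M t / (M t + C))) * S_H t) (Set.Ici 0) t)
    (hodeEH : ∀ t ∈ Set.Ici (0:ℝ), HasDerivWithinAt E_H
        ((τ1 * I_F t + τ2 * I_D t + τ3 * (M t / (M t + C))) * S_H t - (μ1 + β1 + β2) * E_H t) (Set.Ici 0) t)
    (hodeIH : ∀ t ∈ Set.Ici (0:ℝ), HasDerivWithinAt I_H
        (β1 * E_H t - (σ1 + μ1) * I_H t) (Set.Ici 0) t)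
    (hodeRH : ∀ t ∈ Set.Ici (0:ℝ), HasDerivWithinAt R_H
        (β2 * E_H t - (β3 + μ1) * R_H t) (Set.Ici 0) t)
    (hodeSF : ∀ t ∈ Set.Ici (0:ℝ), HasDerivWithinAt S_F
        (θ2 - (κ1 * I_F t + κ2 * I_D t + κ3 * (M t / (M t + C))) * S_F t - μ2 * S_F t) (Set.Ici 0) t)
    (hodeEF : ∀ t ∈ Set.Ici (0:ℝ), HasDerivWithinAt E_F
        ((κ1 * I_F t + κ2 * I_D t + κ3 * (M t / (M t + C))) * S_F t - (μ2 + γ) * E_F t) (Set.Ici 0) t)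
    (hodeIF : ∀ t ∈ Set.Ici (0:ℝ), HasDerivWithinAt I_F
        (γ * E_F t - (μ2 + σ2) * I_F t) (Set.Ici 0) t)
    (hodeSD : ∀ t ∈ Set.Ici (0:ℝ), HasDerivWithinAt S_D
        (θ3 - μ3 * S_D t - (ψ1 * I_F t / (1 + ρ1) + ψ2 * I_D t / (1 + ρ2) + ψ3 * (M t / (M t + C)) / (1 + ρ3)) * S_D t + γ3 * R_D t) (Set.Ici 0) t)
    (hodeED : ∀ t ∈ Set.Ici (0:ℝ), HasDerivWithinAt E_D
        ((ψ1 * I_F t / (1 + ρ1) + ψ2 * I_D t / (1 + ρ2) + ψ3 * (M t / (M t + C)) / (1 + ρ3)) * S_D t - (μ3 + γ1 + γ2) * E_D t) (Set.Ici 0) t)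
    (hodeID : ∀ t ∈ Set.Ici (0:ℝ), HasDerivWithinAt I_D
        (γ1 * E_D t - (μ3 + σ3) * I_D t) (Set.Ici 0) t)
    (hodeRD : ∀ t ∈ Set.Ici (0:ℝ), HasDerivWithinAt R_D
        (γ2 * E_D t - (μ3 + γ3) * R_D t) (Set.Ici 0) t)
    (hodeM : ∀ t ∈ Set.Ici (0:ℝ), HasDerivWithinAt M
        (ν1 * I_H t + ν2 * I_F t + ν3 * I_D t - μ4 * M t) (Set.Ici 0) t)
    (hSH0 : 0 < S_H 0) (hSF0 : 0 < S_F 0) (hSD0 : 0 ≤ S_D 0)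
    (hEH0 : 0 ≤ E_H 0) (hIH0 : 0 ≤ I_H 0) (hRH0 : 0 ≤ R_H 0)
    (hEF0 : 0 ≤ E_F 0) (hIF0 : 0 ≤ I_F 0)
    (hED0 : 0 ≤ E_D 0) (hID0 : 0 ≤ I_D 0) (hRD0 : 0 ≤ R_D 0)
    (hM0 : 0 ≤ M 0) :
    ∀ t ≥ (0:ℝ), 0 < S_H t ∧ 0 < S_F t ∧
      0 ≤ E_H t ∧ 0 ≤ I_H t ∧ 0 ≤ R_H t ∧ 0 ≤ E_F t ∧ 0 ≤ I_F t ∧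
      0 ≤ S_D t ∧ 0 ≤ E_D t ∧ 0 ≤ I_D t ∧ 0 ≤ R_D t ∧ 0 ≤ M t := by
  let p : RabiesParams := ⟨θ1, θ2, θ3, τ1, τ2, τ3, β1, β2, β3, μ1, μ2, μ3, μ4, σ1, σ2, σ3, κ1, κ2,
    κ3, γ, γ1, γ2, γ3, ψ1, ψ2, ψ3, ρ1, ρ2, ρ3, ν1, ν2, ν3, C⟩
  have hp : p.Admissible := ⟨hθ1.le, hθ2.le, hθ3.le, hτ1.le, hτ2.le, hτ3.le, hκ1.le, hκ2.le,
    hκ3.le, hψ1.le, hψ2.le, hψ3.le, hρ1.le, hρ2.le, hρ3.le, hβ1.le, hβ2.le, hβ3.le, hγ.le, hγ1.le,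
    hγ2.le, hγ3.le, hν1.le, hν2.le, hν3.le, hC⟩
  let X : ℝ → Fin 12 → ℝ := fun t =>
    ![S_H t, E_H t, I_H t, R_H t, S_F t, E_F t, I_F t, S_D t, E_D t, I_D t, R_D t, M t]
  have hX : ∀ i, ∀ t ∈ Ici (0 : ℝ),
      HasDerivWithinAt (fun s => X s i) (p.field (X t) i) (Ici 0) t := by
    intro i
    fin_cases i
    exacts [hodeSH, hodeEH, hodeIH, hodeRH, hodeSF, hodeEF, hodeIF, hodeSD, hodeED, hodeID, hodeRD,
      hodeM]
  have hX0 : 0 ≤ X 0 := by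
    intro i
    fin_cases i
    exacts [hSH0.le, hEH0, hIH0, hRH0, hSF0.le, hEF0, hIF0, hSD0, hED0, hID0, hRD0, hM0]
  have hnn := hp.quasiPositive_field.nonneg_of_hasDerivWithinAt hX hX0
  have hpos := hp.susceptibles_pos hX hnn hSH0 hSF0
  exact fun t ht => ⟨(hpos t ht).1, (hpos t ht).2, hnn t ht 1, hnn t ht 2, hnn t ht 3, hnn t ht 5,
    hnn t ht 6, hnn t ht 7, hnn t ht 8, hnn t ht 9, hnn t ht 10, hnn t ht 11⟩

theorem rabies_positivity
    (θ1 θ2 θ3 τ1 τ2 τ3 β1 β2 β3 μ1 μ2 μ3 μ4 σ1 σ2 σ3 κ1 κ2 κ3 γ γ1 γ2 γ3 ψ1 ψ2 ψ3 ρ1 ρ2 ρ3 ν1 ν2 ν3 C : ℝ)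
    (hθ1 : 0 < θ1)
    (hθ2 : 0 < θ2)
    (hθ3 : 0 < θ3)
    (hτ1 : 0 < τ1)
    (hτ2 : 0 < τ2)
    (hτ3 : 0 < τ3)
    (hβ1 : 0 < β1)
    (hβ2 : 0 < β2)
    (hβ3 : 0 < β3)
    (hμ1 : 0 < μ1)
    (hμ2 : 0 < μ2)
    (hμ3 : 0 < μ3)
    (hμ4 : 0 < μ4)
    (hσ1 : 0 < σ1)
    (hσ2 : 0 < σ2)
    (hσ3 : 0 < σ3)
    (hκ1 : 0 < κ1)
    (hκ2 : 0 < κ2)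
    (hκ3 : 0 < κ3)
    (hγ : 0 < γ)
    (hγ1 : 0 < γ1)
    (hγ2 : 0 < γ2)
    (hγ3 : 0 < γ3)
    (hψ1 : 0 < ψ1)
    (hψ2 : 0 < ψ2)
    (hψ3 : 0 < ψ3)
    (hρ1 : 0 < ρ1)
    (hρ2 : 0 < ρ2)
    (hρ3 : 0 < ρ3)
    (hν1 : 0 < ν1)
    (hν2 : 0 < ν2)
    (hν3 : 0 < ν3)
    (hC : 0 < C)
    (S_H E_H I_H R_H S_F E_F I_F S_D E_D I_D R_D M : ℝ → ℝ)
    (hodeSH : ∀ t ∈ Set.Ici (0:ℝ), HasDerivWithinAt S_H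
        (θ1 + β3 * R_H t - μ1 * S_H t - (τ1 * I_F t + τ2 * I_D t + τ3 * (M t / (M t + C))) * S_H t) (Set.Ici 0) t)
    (hodeEH : ∀ t ∈ Set.Ici (0:ℝ), HasDerivWithinAt E_H
        ((τ1 * I_F t + τ2 * I_D t + τ3 * (M t / (M t + C))) * S_H t - (μ1 + β1 + β2) * E_H t) (Set.Ici 0) t)
    (hodeIH : ∀ t ∈ Set.Ici (0:ℝ), HasDerivWithinAt I_H
        (β1 * E_H t - (σ1 + μ1) * I_H t) (Set.Ici 0) t)
    (hodeRH : ∀ t ∈ Set.Ici (0:ℝ), HasDerivWithinAt R_H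
        (β2 * E_H t - (β3 + μ1) * R_H t) (Set.Ici 0) t)
    (hodeSF : ∀ t ∈ Set.Ici (0:ℝ), HasDerivWithinAt S_F
        (θ2 - (κ1 * I_F t + κ2 * I_D t + κ3 * (M t / (M t + C))) * S_F t - μ2 * S_F t) (Set.Ici 0) t)
    (hodeEF : ∀ t ∈ Set.Ici (0:ℝ), HasDerivWithinAt E_F
        ((κ1 * I_F t + κ2 * I_D t + κ3 * (M t / (M t + C))) * S_F t - (μ2 + γ) * E_F t) (Set.Ici 0) t)
    (hodeIF : ∀ t ∈ Set.Ici (0:ℝ), HasDerivWithinAt I_F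
        (γ * E_F t - (μ2 + σ2) * I_F t) (Set.Ici 0) t)
    (hodeSD : ∀ t ∈ Set.Ici (0:ℝ), HasDerivWithinAt S_D
        (θ3 - μ3 * S_D t - (ψ1 * I_F t / (1 + ρ1) + ψ2 * I_D t / (1 + ρ2) + ψ3 * (M t / (M t + C)) / (1 + ρ3)) * S_D t + γ3 * R_D t) (Set.Ici 0) t)
    (hodeED : ∀ t ∈ Set.Ici (0:ℝ), HasDerivWithinAt E_D
        ((ψ1 * I_F t / (1 + ρ1) + ψ2 * I_D t / (1 + ρ2) + ψ3 * (M t / (M t + C)) / (1 + ρ3)) * S_D t - (μ3 + γ1 + γ2) * E_D t) (Set.Ici 0) t)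
    (hodeID : ∀ t ∈ Set.Ici (0:ℝ), HasDerivWithinAt I_D
        (γ1 * E_D t - (μ3 + σ3) * I_D t) (Set.Ici 0) t)
    (hodeRD : ∀ t ∈ Set.Ici (0:ℝ), HasDerivWithinAt R_D
        (γ2 * E_D t - (μ3 + γ3) * R_D t) (Set.Ici 0) t)
    (hodeM : ∀ t ∈ Set.Ici (0:ℝ), HasDerivWithinAt M
        (ν1 * I_H t + ν2 * I_F t + ν3 * I_D t - μ4 * M t) (Set.Ici 0) t)
    (hSH0 : 0 < S_H 0) (hSF0 : 0 < S_F 0) (hSD0 : 0 ≤ S_D 0)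
    (hEH0 : 0 ≤ E_H 0) (hIH0 : 0 ≤ I_H 0) (hRH0 : 0 ≤ R_H 0)
    (hEF0 : 0 ≤ E_F 0) (hIF0 : 0 ≤ I_F 0)
    (hED0 : 0 ≤ E_D 0) (hID0 : 0 ≤ I_D 0) (hRD0 : 0 ≤ R_D 0)
    (hM0 : 0 ≤ M 0) :
    ∀ t ≥ (0:ℝ), 0 < S_H t ∧ 0 < S_F t ∧
      0 ≤ E_H t ∧ 0 ≤ I_H t ∧ 0 ≤ R_H t ∧ 0 ≤ E_F t ∧ 0 ≤ I_F t ∧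
      0 ≤ S_D t ∧ 0 ≤ E_D t ∧ 0 ≤ I_D t ∧ 0 ≤ R_D t ∧ 0 ≤ M t :=
  rabies_positivity_general θ1 θ2 θ3 τ1 τ2 τ3 β1 β2 β3 μ1 μ2 μ3 μ4 σ1 σ2 σ3 κ1 κ2 κ3 γ γ1 γ2 γ3 ψ1
    ψ2 ψ3 ρ1 ρ2 ρ3 ν1 ν2 ν3 C hθ1 hθ2 hθ3 hτ1 hτ2 hτ3 hβ1 hβ2 hβ3 hκ1 hκ2 hκ3 hγ hγ1 hγ2 hγ3 hψ1 hψ2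
    hψ3 hρ1 hρ2 hρ3 hν1 hν2 hν3 hC S_H E_H I_H R_H S_F E_F I_F S_D E_D I_D R_D M hodeSH hodeEH
    hodeIH hodeRH hodeSF hodeEF hodeIF hodeSD hodeED hodeID hodeRD hodeM hSH0 hSF0 hSD0 hEH0 hIH0
    hRH0 hEF0 hIF0 hED0 hID0 hRD0 hM0
end

section
/- Boundedness of the free-range dog population (part of Theorem 2): Let S_F, E_F, I_F be the free-range dog components of a solution of the rabies model on [0, ∞) with all twelve components nonnegative on [0, ∞), and set N_F(t) = S_F(t) + E_F(t) + I_F(t). Then N_F'(t) = θ2 − μ2·N_F(t) − σ2·I_F(t) ≤ θ2 − μ2·N_F(t) for all t ≥ 0, and if N_F(0) ≤ θ2/μ2 then N_F(t) ≤ θ2/μ2 for all t ≥ 0. -/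
/-! The total free-range population `N = S_F + E_F + I_F` satisfies `N' = θ₂ - μ₂ N - σ₂ I_F`, because the
infection flux only moves dogs between compartments. Since `I_F ≥ 0` this gives `N' ≤ μ₂ (θ₂/μ₂ - N)`,
so `exp (μ₂ t) (N t - θ₂/μ₂)` is antitone and cannot become positive once it starts nonpositive. -/

open Set Real

section LinearDifferentialInequality

variable {f f' : ℝ → ℝ} {a μ K : ℝ}

theorem antitoneOn_exp_mul_mul_sub_of_deriv_le_mul_sub
    (hf : ∀ t ∈ Ici a, HasDerivWithinAt f (f' t) (Ici a) t)
    (hle : ∀ t ∈ Ici a, f' t ≤ μ * (K - f t)) :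
    AntitoneOn (fun t => exp (μ * t) * (f t - K)) (Ici a) := by
  have hderiv : ∀ t ∈ Ici a, HasDerivWithinAt (fun t => exp (μ * t) * (f t - K))
      (exp (μ * t) * (f' t - μ * (K - f t))) (Ici a) t := by
    intro t ht
    have hexp : HasDerivWithinAt (fun t => exp (μ * t)) (exp (μ * t) * μ) (Ici a) t :=
      ((hasDerivAt_id t).const_mul μ).exp.hasDerivWithinAt.congr_deriv (by simp)
    exact (hexp.mul ((hf t ht).sub_const K)).congr_deriv (by ring)
  refine antitoneOn_of_hasDerivWithinAt_nonpos (f' := fun t => exp (μ * t) * (f' t - μ * (K - f t)))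
    (convex_Ici a)
    (fun t ht => (hderiv t ht).continuousWithinAt) (fun t ht => ?_) (fun t ht => ?_)
  · rw [interior_Ici] at ht ⊢
    exact (hderiv t (Ioi_subset_Ici_self ht)).mono Ioi_subset_Ici_self
  · rw [interior_Ici] at ht
    exact mul_nonpos_of_nonneg_of_nonpos (exp_nonneg _)
      (sub_nonpos.mpr (hle t (Ioi_subset_Ici_self ht)))

theorem image_le_of_hasDerivWithinAt_le_mul_sub
    (hf : ∀ t ∈ Ici a, HasDerivWithinAt f (f' t) (Ici a) t)
    (hle : ∀ t ∈ Ici a, f' t ≤ μ * (K - f t)) (ha : f a ≤ K) :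
    ∀ t ≥ a, f t ≤ K := by
  intro t ht
  have hanti := antitoneOn_exp_mul_mul_sub_of_deriv_le_mul_sub hf hle self_mem_Ici ht ht
  have hweighted : exp (μ * t) * (f t - K) ≤ 0 :=
    hanti.trans (mul_nonpos_of_nonneg_of_nonpos (exp_nonneg _) (sub_nonpos.mpr ha))
  exact sub_nonpos.mp (nonpos_of_mul_nonpos_right hweighted (exp_pos _))

end LinearDifferentialInequality

theorem HasDerivWithinAt.add_add_of_susceptible_exposed_infected {S E I : ℝ → ℝ} {s : Set ℝ}
    {t θ χ μ γ σ : ℝ}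
    (hS : HasDerivWithinAt S (θ - χ - μ * S t) s t)
    (hE : HasDerivWithinAt E (χ - (μ + γ) * E t) s t)
    (hI : HasDerivWithinAt I (γ * E t - (μ + σ) * I t) s t) :
    HasDerivWithinAt (fun u => S u + E u + I u) (θ - μ * (S t + E t + I t) - σ * I t) s t :=
  ((hS.add hE).add hI).congr_deriv (by ring)

theorem free_range_dog_boundedness_general
    (θ2 μ2 σ2 κ1 κ2 κ3 γ C : ℝ)
    (hμ2 : 0 < μ2)
    (hσ2 : 0 < σ2)
    (S_H E_H I_H R_H S_F E_F I_F S_D E_D I_D R_D M : ℝ → ℝ)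
    (hodeSF : ∀ t ∈ Set.Ici (0:ℝ), HasDerivWithinAt S_F
        (θ2 - (κ1 * I_F t + κ2 * I_D t + κ3 * (M t / (M t + C))) * S_F t - μ2 * S_F t) (Set.Ici 0) t)
    (hodeEF : ∀ t ∈ Set.Ici (0:ℝ), HasDerivWithinAt E_F
        ((κ1 * I_F t + κ2 * I_D t + κ3 * (M t / (M t + C))) * S_F t - (μ2 + γ) * E_F t) (Set.Ici 0) t)
    (hodeIF : ∀ t ∈ Set.Ici (0:ℝ), HasDerivWithinAt I_F
        (γ * E_F t - (μ2 + σ2) * I_F t) (Set.Ici 0) t)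
    (hnn : ∀ t ≥ (0:ℝ), 0 ≤ S_H t ∧ 0 ≤ E_H t ∧ 0 ≤ I_H t ∧ 0 ≤ R_H t ∧ 0 ≤ S_F t ∧ 0 ≤ E_F t ∧ 0 ≤ I_F t ∧ 0 ≤ S_D t ∧ 0 ≤ E_D t ∧ 0 ≤ I_D t ∧ 0 ≤ R_D t ∧ 0 ≤ M t)
    :
    (∀ t ∈ Set.Ici (0:ℝ), HasDerivWithinAt
      (fun s => S_F s + E_F s + I_F s)
      (θ2 - μ2 * (S_F t + E_F t + I_F t) - σ2 * I_F t) (Set.Ici 0) t) ∧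
    (∀ t ≥ (0:ℝ), θ2 - μ2 * (S_F t + E_F t + I_F t) - σ2 * I_F t ≤
      θ2 - μ2 * (S_F t + E_F t + I_F t)) ∧
    (S_F 0 + E_F 0 + I_F 0 ≤ θ2 / μ2 →
      ∀ t ≥ (0:ℝ), S_F t + E_F t + I_F t ≤ θ2 / μ2) := by
  have hderiv : ∀ t ∈ Set.Ici (0:ℝ), HasDerivWithinAt (fun s => S_F s + E_F s + I_F s)
      (θ2 - μ2 * (S_F t + E_F t + I_F t) - σ2 * I_F t) (Set.Ici 0) t := fun t ht =>
    (hodeSF t ht).add_add_of_susceptible_exposed_infected (hodeEF t ht) (hodeIF t ht)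
  have hdecay : ∀ t ≥ (0:ℝ), θ2 - μ2 * (S_F t + E_F t + I_F t) - σ2 * I_F t ≤
      θ2 - μ2 * (S_F t + E_F t + I_F t) := fun t ht =>
    sub_le_self _ (mul_nonneg hσ2.le (hnn t ht).2.2.2.2.2.2.1)
  have hequilibrium : ∀ N : ℝ, θ2 - μ2 * N = μ2 * (θ2 / μ2 - N) := fun N => by
    field_simp
  refine ⟨hderiv, hdecay, image_le_of_hasDerivWithinAt_le_mul_sub (μ := μ2) hderiv fun t ht => ?_⟩
  exact (hdecay t ht).trans_eq (hequilibrium _)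

theorem free_range_dog_boundedness
    (θ1 θ2 θ3 τ1 τ2 τ3 β1 β2 β3 μ1 μ2 μ3 μ4 σ1 σ2 σ3 κ1 κ2 κ3 γ γ1 γ2 γ3 ψ1 ψ2 ψ3 ρ1 ρ2 ρ3 ν1 ν2 ν3 C : ℝ)
    (hθ1 : 0 < θ1)
    (hθ2 : 0 < θ2)
    (hθ3 : 0 < θ3)
    (hτ1 : 0 < τ1)
    (hτ2 : 0 < τ2)
    (hτ3 : 0 < τ3)
    (hβ1 : 0 < β1)
    (hβ2 : 0 < β2)
    (hβ3 : 0 < β3)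
    (hμ1 : 0 < μ1)
    (hμ2 : 0 < μ2)
    (hμ3 : 0 < μ3)
    (hμ4 : 0 < μ4)
    (hσ1 : 0 < σ1)
    (hσ2 : 0 < σ2)
    (hσ3 : 0 < σ3)
    (hκ1 : 0 < κ1)
    (hκ2 : 0 < κ2)
    (hκ3 : 0 < κ3)
    (hγ : 0 < γ)
    (hγ1 : 0 < γ1)
    (hγ2 : 0 < γ2)
    (hγ3 : 0 < γ3)
    (hψ1 : 0 < ψ1)
    (hψ2 : 0 < ψ2)
    (hψ3 : 0 < ψ3)
    (hρ1 : 0 < ρ1)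
    (hρ2 : 0 < ρ2)
    (hρ3 : 0 < ρ3)
    (hν1 : 0 < ν1)
    (hν2 : 0 < ν2)
    (hν3 : 0 < ν3)
    (hC : 0 < C)
    (S_H E_H I_H R_H S_F E_F I_F S_D E_D I_D R_D M : ℝ → ℝ)
    (hodeSH : ∀ t ∈ Set.Ici (0:ℝ), HasDerivWithinAt S_H
        (θ1 + β3 * R_H t - μ1 * S_H t - (τ1 * I_F t + τ2 * I_D t + τ3 * (M t / (M t + C))) * S_H t) (Set.Ici 0) t)
    (hodeEH : ∀ t ∈ Set.Ici (0:ℝ), HasDerivWithinAt E_H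
        ((τ1 * I_F t + τ2 * I_D t + τ3 * (M t / (M t + C))) * S_H t - (μ1 + β1 + β2) * E_H t) (Set.Ici 0) t)
    (hodeIH : ∀ t ∈ Set.Ici (0:ℝ), HasDerivWithinAt I_H
        (β1 * E_H t - (σ1 + μ1) * I_H t) (Set.Ici 0) t)
    (hodeRH : ∀ t ∈ Set.Ici (0:ℝ), HasDerivWithinAt R_H
        (β2 * E_H t - (β3 + μ1) * R_H t) (Set.Ici 0) t)
    (hodeSF : ∀ t ∈ Set.Ici (0:ℝ), HasDerivWithinAt S_F
        (θ2 - (κ1 * I_F t + κ2 * I_D t + κ3 * (M t / (M t + C))) * S_F t - μ2 * S_F t) (Set.Ici 0) t)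
    (hodeEF : ∀ t ∈ Set.Ici (0:ℝ), HasDerivWithinAt E_F
        ((κ1 * I_F t + κ2 * I_D t + κ3 * (M t / (M t + C))) * S_F t - (μ2 + γ) * E_F t) (Set.Ici 0) t)
    (hodeIF : ∀ t ∈ Set.Ici (0:ℝ), HasDerivWithinAt I_F
        (γ * E_F t - (μ2 + σ2) * I_F t) (Set.Ici 0) t)
    (hodeSD : ∀ t ∈ Set.Ici (0:ℝ), HasDerivWithinAt S_D
        (θ3 - μ3 * S_D t - (ψ1 * I_F t / (1 + ρ1) + ψ2 * I_D t / (1 + ρ2) + ψ3 * (M t / (M t + C)) / (1 + ρ3)) * S_D t + γ3 * R_D t) (Set.Ici 0) t)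
    (hodeED : ∀ t ∈ Set.Ici (0:ℝ), HasDerivWithinAt E_D
        ((ψ1 * I_F t / (1 + ρ1) + ψ2 * I_D t / (1 + ρ2) + ψ3 * (M t / (M t + C)) / (1 + ρ3)) * S_D t - (μ3 + γ1 + γ2) * E_D t) (Set.Ici 0) t)
    (hodeID : ∀ t ∈ Set.Ici (0:ℝ), HasDerivWithinAt I_D
        (γ1 * E_D t - (μ3 + σ3) * I_D t) (Set.Ici 0) t)
    (hodeRD : ∀ t ∈ Set.Ici (0:ℝ), HasDerivWithinAt R_D
        (γ2 * E_D t - (μ3 + γ3) * R_D t) (Set.Ici 0) t)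
    (hodeM : ∀ t ∈ Set.Ici (0:ℝ), HasDerivWithinAt M
        (ν1 * I_H t + ν2 * I_F t + ν3 * I_D t - μ4 * M t) (Set.Ici 0) t)
    (hnn : ∀ t ≥ (0:ℝ), 0 ≤ S_H t ∧ 0 ≤ E_H t ∧ 0 ≤ I_H t ∧ 0 ≤ R_H t ∧ 0 ≤ S_F t ∧ 0 ≤ E_F t ∧ 0 ≤ I_F t ∧ 0 ≤ S_D t ∧ 0 ≤ E_D t ∧ 0 ≤ I_D t ∧ 0 ≤ R_D t ∧ 0 ≤ M t)
    :
    (∀ t ∈ Set.Ici (0:ℝ), HasDerivWithinAt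
      (fun s => S_F s + E_F s + I_F s)
      (θ2 - μ2 * (S_F t + E_F t + I_F t) - σ2 * I_F t) (Set.Ici 0) t) ∧
    (∀ t ≥ (0:ℝ), θ2 - μ2 * (S_F t + E_F t + I_F t) - σ2 * I_F t ≤
      θ2 - μ2 * (S_F t + E_F t + I_F t)) ∧
    (S_F 0 + E_F 0 + I_F 0 ≤ θ2 / μ2 →
      ∀ t ≥ (0:ℝ), S_F t + E_F t + I_F t ≤ θ2 / μ2) :=
  free_range_dog_boundedness_general θ2 μ2 σ2 κ1 κ2 κ3 γ C hμ2 hσ2 S_H E_H I_H R_H S_F E_F I_F S_D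
    E_D I_D R_D M hodeSF hodeEF hodeIF hnn
end

section
/- Boundedness of the domestic dog population (part of Theorem 2): Let S_D, E_D, I_D, R_D be the domestic dog components of a solution of the rabies model on [0, ∞) with all twelve components nonnegative on [0, ∞), and set N_D(t) = S_D(t) + E_D(t) + I_D(t) + R_D(t). Then N_D'(t) = θ3 − μ3·N_D(t) − σ3·I_D(t) ≤ θ3 − μ3·N_D(t) for all t ≥ 0, and if N_D(0) ≤ θ3/μ3 then N_D(t) ≤ θ3/μ3 for all t ≥ 0. -/
/-!
Adding the four dog equations, the force of infection and the transfers between compartments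
cancel, leaving `N_D' = θ₃ - μ₃ N_D - σ₃ I_D ≤ θ₃ - μ₃ N_D` since `I_D ≥ 0`. For such a differential
inequality the integrating factor makes `(N_D - θ₃/μ₃) e^{μ₃ t}` antitone, so `N_D` stays below the
equilibrium `θ₃/μ₃` once it starts there.
-/

open Set Real

theorem hasDerivWithinAt_SEIRS_total {S E I R : ℝ → ℝ} {s : Set ℝ} {t θ μ σ γ₁ γ₂ γ₃ χ : ℝ}
    (hS : HasDerivWithinAt S (θ - μ * S t - χ + γ₃ * R t) s t)
    (hE : HasDerivWithinAt E (χ - (μ + γ₁ + γ₂) * E t) s t)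
    (hI : HasDerivWithinAt I (γ₁ * E t - (μ + σ) * I t) s t)
    (hR : HasDerivWithinAt R (γ₂ * E t - (μ + γ₃) * R t) s t) :
    HasDerivWithinAt (fun x => S x + E x + I x + R x)
      (θ - μ * (S t + E t + I t + R t) - σ * I t) s t :=
  (((hS.add hE).add hI).add hR).congr_deriv (by ring)

section IntegratingFactor

variable {f f' : ℝ → ℝ} {a θ μ : ℝ}

theorem antitoneOn_sub_div_mul_exp (hμ : μ ≠ 0)
    (hf : ∀ t ∈ Ici a, HasDerivWithinAt f (f' t) (Ici a) t)
    (hbound : ∀ t ∈ Ici a, f' t ≤ θ - μ * f t) :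
    AntitoneOn (fun t => (f t - θ / μ) * exp (μ * t)) (Ici a) := by
  have hg : ∀ t ∈ Ici a, HasDerivWithinAt (fun t => (f t - θ / μ) * exp (μ * t))
      ((f' t - (θ - μ * f t)) * exp (μ * t)) (Ici a) t := by
    intro t ht
    have hexp : HasDerivWithinAt (fun t => exp (μ * t)) (exp (μ * t) * μ) (Ici a) t :=
      ((hasDerivAt_id t).const_mul μ).exp.hasDerivWithinAt.congr_deriv (by simp)
    exact (((hf t ht).sub_const (θ / μ)).mul hexp).congr_deriv (by field_simp; ring)
  refine antitoneOn_of_hasDerivWithinAt_nonpos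
    (f' := fun t => (f' t - (θ - μ * f t)) * exp (μ * t)) (convex_Ici a)
    (fun t ht => (hg t ht).continuousWithinAt) (fun t ht => ?_) (fun t ht => ?_)
  · rw [interior_Ici] at ht ⊢
    exact (hg t (Ioi_subset_Ici_self ht)).mono Ioi_subset_Ici_self
  · rw [interior_Ici] at ht
    exact mul_nonpos_of_nonpos_of_nonneg
      (sub_nonpos.2 (hbound t (Ioi_subset_Ici_self ht))) (exp_pos _).le

theorem le_div_of_hasDerivWithinAt_le_sub_mul (hμ : μ ≠ 0)
    (hf : ∀ t ∈ Ici a, HasDerivWithinAt f (f' t) (Ici a) t)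
    (hbound : ∀ t ∈ Ici a, f' t ≤ θ - μ * f t) (ha : f a ≤ θ / μ) :
    ∀ t ∈ Ici a, f t ≤ θ / μ := by
  intro t ht
  have hmono := antitoneOn_sub_div_mul_exp hμ hf hbound self_mem_Ici ht ht
  have hstart : (f a - θ / μ) * exp (μ * a) ≤ 0 :=
    mul_nonpos_of_nonpos_of_nonneg (sub_nonpos.2 ha) (exp_pos _).le
  exact sub_nonpos.1 (nonpos_of_mul_nonpos_left (hmono.trans hstart) (exp_pos _))

end IntegratingFactor

theorem domestic_dog_boundedness_general
    (θ3 μ3 σ3 γ1 γ2 γ3 ψ1 ψ2 ψ3 ρ1 ρ2 ρ3 C : ℝ)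
    (hμ3 : 0 < μ3)
    (hσ3 : 0 < σ3)
    (S_H E_H I_H R_H S_F E_F I_F S_D E_D I_D R_D M : ℝ → ℝ)
    (hodeSD : ∀ t ∈ Set.Ici (0:ℝ), HasDerivWithinAt S_D
        (θ3 - μ3 * S_D t - (ψ1 * I_F t / (1 + ρ1) + ψ2 * I_D t / (1 + ρ2) + ψ3 * (M t / (M t + C)) / (1 + ρ3)) * S_D t + γ3 * R_D t) (Set.Ici 0) t)
    (hodeED : ∀ t ∈ Set.Ici (0:ℝ), HasDerivWithinAt E_D
        ((ψ1 * I_F t / (1 + ρ1) + ψ2 * I_D t / (1 + ρ2) + ψ3 * (M t / (M t + C)) / (1 + ρ3)) * S_D t - (μ3 + γ1 + γ2) * E_D t) (Set.Ici 0) t)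
    (hodeID : ∀ t ∈ Set.Ici (0:ℝ), HasDerivWithinAt I_D
        (γ1 * E_D t - (μ3 + σ3) * I_D t) (Set.Ici 0) t)
    (hodeRD : ∀ t ∈ Set.Ici (0:ℝ), HasDerivWithinAt R_D
        (γ2 * E_D t - (μ3 + γ3) * R_D t) (Set.Ici 0) t)
    (hnn : ∀ t ≥ (0:ℝ), 0 ≤ S_H t ∧ 0 ≤ E_H t ∧ 0 ≤ I_H t ∧ 0 ≤ R_H t ∧ 0 ≤ S_F t ∧ 0 ≤ E_F t ∧ 0 ≤ I_F t ∧ 0 ≤ S_D t ∧ 0 ≤ E_D t ∧ 0 ≤ I_D t ∧ 0 ≤ R_D t ∧ 0 ≤ M t)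
    :
    (∀ t ∈ Set.Ici (0:ℝ), HasDerivWithinAt
      (fun s => S_D s + E_D s + I_D s + R_D s)
      (θ3 - μ3 * (S_D t + E_D t + I_D t + R_D t) - σ3 * I_D t) (Set.Ici 0) t) ∧
    (∀ t ≥ (0:ℝ), θ3 - μ3 * (S_D t + E_D t + I_D t + R_D t) - σ3 * I_D t ≤
      θ3 - μ3 * (S_D t + E_D t + I_D t + R_D t)) ∧
    (S_D 0 + E_D 0 + I_D 0 + R_D 0 ≤ θ3 / μ3 →
      ∀ t ≥ (0:ℝ), S_D t + E_D t + I_D t + R_D t ≤ θ3 / μ3) := by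
  have hN : ∀ t ∈ Ici (0:ℝ), HasDerivWithinAt (fun s => S_D s + E_D s + I_D s + R_D s)
      (θ3 - μ3 * (S_D t + E_D t + I_D t + R_D t) - σ3 * I_D t) (Ici 0) t := fun t ht =>
    hasDerivWithinAt_SEIRS_total (hodeSD t ht) (hodeED t ht) (hodeID t ht) (hodeRD t ht)
  have hloss : ∀ t ≥ (0:ℝ), θ3 - μ3 * (S_D t + E_D t + I_D t + R_D t) - σ3 * I_D t ≤
      θ3 - μ3 * (S_D t + E_D t + I_D t + R_D t) := fun t ht =>
    sub_le_self _ (mul_nonneg hσ3.le (hnn t ht).2.2.2.2.2.2.2.2.2.1)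
  exact ⟨hN, hloss, fun h0 t ht =>
    le_div_of_hasDerivWithinAt_le_sub_mul hμ3.ne' hN hloss h0 t ht⟩

theorem domestic_dog_boundedness
    (θ1 θ2 θ3 τ1 τ2 τ3 β1 β2 β3 μ1 μ2 μ3 μ4 σ1 σ2 σ3 κ1 κ2 κ3 γ γ1 γ2 γ3 ψ1 ψ2 ψ3 ρ1 ρ2 ρ3 ν1 ν2 ν3 C : ℝ)
    (hθ1 : 0 < θ1)
    (hθ2 : 0 < θ2)
    (hθ3 : 0 < θ3)
    (hτ1 : 0 < τ1)
    (hτ2 : 0 < τ2)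
    (hτ3 : 0 < τ3)
    (hβ1 : 0 < β1)
    (hβ2 : 0 < β2)
    (hβ3 : 0 < β3)
    (hμ1 : 0 < μ1)
    (hμ2 : 0 < μ2)
    (hμ3 : 0 < μ3)
    (hμ4 : 0 < μ4)
    (hσ1 : 0 < σ1)
    (hσ2 : 0 < σ2)
    (hσ3 : 0 < σ3)
    (hκ1 : 0 < κ1)
    (hκ2 : 0 < κ2)
    (hκ3 : 0 < κ3)
    (hγ : 0 < γ)
    (hγ1 : 0 < γ1)
    (hγ2 : 0 < γ2)
    (hγ3 : 0 < γ3)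
    (hψ1 : 0 < ψ1)
    (hψ2 : 0 < ψ2)
    (hψ3 : 0 < ψ3)
    (hρ1 : 0 < ρ1)
    (hρ2 : 0 < ρ2)
    (hρ3 : 0 < ρ3)
    (hν1 : 0 < ν1)
    (hν2 : 0 < ν2)
    (hν3 : 0 < ν3)
    (hC : 0 < C)
    (S_H E_H I_H R_H S_F E_F I_F S_D E_D I_D R_D M : ℝ → ℝ)
    (hodeSH : ∀ t ∈ Set.Ici (0:ℝ), HasDerivWithinAt S_H
        (θ1 + β3 * R_H t - μ1 * S_H t - (τ1 * I_F t + τ2 * I_D t + τ3 * (M t / (M t + C))) * S_H t) (Set.Ici 0) t)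
    (hodeEH : ∀ t ∈ Set.Ici (0:ℝ), HasDerivWithinAt E_H
        ((τ1 * I_F t + τ2 * I_D t + τ3 * (M t / (M t + C))) * S_H t - (μ1 + β1 + β2) * E_H t) (Set.Ici 0) t)
    (hodeIH : ∀ t ∈ Set.Ici (0:ℝ), HasDerivWithinAt I_H
        (β1 * E_H t - (σ1 + μ1) * I_H t) (Set.Ici 0) t)
    (hodeRH : ∀ t ∈ Set.Ici (0:ℝ), HasDerivWithinAt R_H
        (β2 * E_H t - (β3 + μ1) * R_H t) (Set.Ici 0) t)
    (hodeSF : ∀ t ∈ Set.Ici (0:ℝ), HasDerivWithinAt S_F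
        (θ2 - (κ1 * I_F t + κ2 * I_D t + κ3 * (M t / (M t + C))) * S_F t - μ2 * S_F t) (Set.Ici 0) t)
    (hodeEF : ∀ t ∈ Set.Ici (0:ℝ), HasDerivWithinAt E_F
        ((κ1 * I_F t + κ2 * I_D t + κ3 * (M t / (M t + C))) * S_F t - (μ2 + γ) * E_F t) (Set.Ici 0) t)
    (hodeIF : ∀ t ∈ Set.Ici (0:ℝ), HasDerivWithinAt I_F
        (γ * E_F t - (μ2 + σ2) * I_F t) (Set.Ici 0) t)
    (hodeSD : ∀ t ∈ Set.Ici (0:ℝ), HasDerivWithinAt S_D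
        (θ3 - μ3 * S_D t - (ψ1 * I_F t / (1 + ρ1) + ψ2 * I_D t / (1 + ρ2) + ψ3 * (M t / (M t + C)) / (1 + ρ3)) * S_D t + γ3 * R_D t) (Set.Ici 0) t)
    (hodeED : ∀ t ∈ Set.Ici (0:ℝ), HasDerivWithinAt E_D
        ((ψ1 * I_F t / (1 + ρ1) + ψ2 * I_D t / (1 + ρ2) + ψ3 * (M t / (M t + C)) / (1 + ρ3)) * S_D t - (μ3 + γ1 + γ2) * E_D t) (Set.Ici 0) t)
    (hodeID : ∀ t ∈ Set.Ici (0:ℝ), HasDerivWithinAt I_D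
        (γ1 * E_D t - (μ3 + σ3) * I_D t) (Set.Ici 0) t)
    (hodeRD : ∀ t ∈ Set.Ici (0:ℝ), HasDerivWithinAt R_D
        (γ2 * E_D t - (μ3 + γ3) * R_D t) (Set.Ici 0) t)
    (hodeM : ∀ t ∈ Set.Ici (0:ℝ), HasDerivWithinAt M
        (ν1 * I_H t + ν2 * I_F t + ν3 * I_D t - μ4 * M t) (Set.Ici 0) t)
    (hnn : ∀ t ≥ (0:ℝ), 0 ≤ S_H t ∧ 0 ≤ E_H t ∧ 0 ≤ I_H t ∧ 0 ≤ R_H t ∧ 0 ≤ S_F t ∧ 0 ≤ E_F t ∧ 0 ≤ I_F t ∧ 0 ≤ S_D t ∧ 0 ≤ E_D t ∧ 0 ≤ I_D t ∧ 0 ≤ R_D t ∧ 0 ≤ M t)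
    :
    (∀ t ∈ Set.Ici (0:ℝ), HasDerivWithinAt
      (fun s => S_D s + E_D s + I_D s + R_D s)
      (θ3 - μ3 * (S_D t + E_D t + I_D t + R_D t) - σ3 * I_D t) (Set.Ici 0) t) ∧
    (∀ t ≥ (0:ℝ), θ3 - μ3 * (S_D t + E_D t + I_D t + R_D t) - σ3 * I_D t ≤
      θ3 - μ3 * (S_D t + E_D t + I_D t + R_D t)) ∧
    (S_D 0 + E_D 0 + I_D 0 + R_D 0 ≤ θ3 / μ3 →
      ∀ t ≥ (0:ℝ), S_D t + E_D t + I_D t + R_D t ≤ θ3 / μ3) :=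
  domestic_dog_boundedness_general θ3 μ3 σ3 γ1 γ2 γ3 ψ1 ψ2 ψ3 ρ1 ρ2 ρ3 C hμ3 hσ3 S_H E_H I_H R_H S_F
    E_F I_F S_D E_D I_D R_D M hodeSD hodeED hodeID hodeRD hnn
end

section
/- Exponential decay estimate for the total human population (consequence of equations (13)–(16) in the proof of Theorem 2): Let S_H, E_H, I_H, R_H be the human components of a solution of the rabies model on [0, ∞) with I_H(t) ≥ 0 for all t ≥ 0, and set N_H(t) = S_H(t) + E_H(t) + I_H(t) + R_H(t). Then N_H(t) ≤ θ1/μ1 + (N_H(0) − θ1/μ1)·e^{−μ1·t} for all t ≥ 0; in particular, if N_H(0) ≥ 0 then N_H(t) ≤ max{θ1/μ1, N_H(0)} for all t ≥ 0. -/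
/-!
The total human population `N = S_H + E_H + I_H + R_H` satisfies `N' = θ1 - μ1 N - σ1 I_H`, since
the infection, progression and recovery terms cancel in the sum. As `σ1 I_H ≥ 0`, this gives the
linear differential inequality `N' ≤ θ1 - μ1 N`, and Grönwall's inequality with the negative rate
`-μ1` bounds `N` by the solution `θ1/μ1 + (N 0 - θ1/μ1) e^{-μ1 t}` of the corresponding equation,
which is a convex combination of `θ1/μ1` and `N 0`.
-/

open Set Real

theorem le_gronwallBound_of_hasDerivWithinAt_Ici {f f' : ℝ → ℝ} {δ K ε a : ℝ}
    (hf : ∀ x ∈ Ici a, HasDerivWithinAt f (f' x) (Ici a) x) (ha : f a ≤ δ)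
    (bound : ∀ x ∈ Ici a, f' x ≤ K * f x + ε) :
    ∀ x ∈ Ici a, f x ≤ gronwallBound δ K ε (x - a) := by
  intro x hx
  refine le_gronwallBound_of_liminf_deriv_right_le (b := x) (fun y hy => ?_) (fun y hy r hr => ?_)
    ha (fun y hy => bound y hy.1) x ⟨hx, le_rfl⟩
  · exact (hf y hy.1).continuousWithinAt.mono Icc_subset_Ici_self
  · exact ((hf y hy.1).mono (Ici_subset_Ici.2 hy.1)).liminf_right_slope_le hr

theorem gronwallBound_neg {μ : ℝ} (hμ : μ ≠ 0) (δ ε x : ℝ) :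
    gronwallBound δ (-μ) ε x = ε / μ + (δ - ε / μ) * exp (-μ * x) := by
  rw [gronwallBound_of_K_ne_0 (neg_ne_zero.2 hμ), div_neg]
  ring

theorem add_sub_mul_le_max {c d e : ℝ} (he₀ : 0 ≤ e) (he₁ : e ≤ 1) :
    c + (d - c) * e ≤ max c d := by
  have h := Convex.combo_le_max c d (sub_nonneg.2 he₁) he₀ (sub_add_cancel 1 e)
  simp only [smul_eq_mul] at h
  linarith

theorem hasDerivWithinAt_human_total {S E I R : ℝ → ℝ} {s : Set ℝ} {x θ μ σ β1 β2 β3 χ : ℝ}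
    (hS : HasDerivWithinAt S (θ + β3 * R x - μ * S x - χ * S x) s x)
    (hE : HasDerivWithinAt E (χ * S x - (μ + β1 + β2) * E x) s x)
    (hI : HasDerivWithinAt I (β1 * E x - (σ + μ) * I x) s x)
    (hR : HasDerivWithinAt R (β2 * E x - (β3 + μ) * R x) s x) :
    HasDerivWithinAt (fun t => S t + E t + I t + R t)
      (θ - μ * (S x + E x + I x + R x) - σ * I x) s x :=
  (((hS.add hE).add hI).add hR).congr_deriv (by ring)

theorem human_population_decay_general
    (θ1 τ1 τ2 τ3 β1 β2 β3 μ1 σ1 C : ℝ)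
    (hμ1 : 0 < μ1)
    (hσ1 : 0 < σ1)
    (S_H E_H I_H R_H I_F I_D M : ℝ → ℝ)
    (hodeSH : ∀ t ∈ Set.Ici (0:ℝ), HasDerivWithinAt S_H
        (θ1 + β3 * R_H t - μ1 * S_H t - (τ1 * I_F t + τ2 * I_D t + τ3 * (M t / (M t + C))) * S_H t) (Set.Ici 0) t)
    (hodeEH : ∀ t ∈ Set.Ici (0:ℝ), HasDerivWithinAt E_H
        ((τ1 * I_F t + τ2 * I_D t + τ3 * (M t / (M t + C))) * S_H t - (μ1 + β1 + β2) * E_H t) (Set.Ici 0) t)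
    (hodeIH : ∀ t ∈ Set.Ici (0:ℝ), HasDerivWithinAt I_H
        (β1 * E_H t - (σ1 + μ1) * I_H t) (Set.Ici 0) t)
    (hodeRH : ∀ t ∈ Set.Ici (0:ℝ), HasDerivWithinAt R_H
        (β2 * E_H t - (β3 + μ1) * R_H t) (Set.Ici 0) t)
    (hIHnn : ∀ t ≥ (0:ℝ), 0 ≤ I_H t) :
    (∀ t ≥ (0:ℝ), S_H t + E_H t + I_H t + R_H t ≤
      θ1 / μ1 + (S_H 0 + E_H 0 + I_H 0 + R_H 0 - θ1 / μ1) * Real.exp (-μ1 * t)) ∧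
    (0 ≤ S_H 0 + E_H 0 + I_H 0 + R_H 0 →
      ∀ t ≥ (0:ℝ), S_H t + E_H t + I_H t + R_H t ≤
        max (θ1 / μ1) (S_H 0 + E_H 0 + I_H 0 + R_H 0)) := by
  have hN := fun t (ht : t ∈ Ici (0:ℝ)) =>
    hasDerivWithinAt_human_total (hodeSH t ht) (hodeEH t ht) (hodeIH t ht) (hodeRH t ht)
  have decay : ∀ t ≥ (0:ℝ), S_H t + E_H t + I_H t + R_H t ≤
      θ1 / μ1 + (S_H 0 + E_H 0 + I_H 0 + R_H 0 - θ1 / μ1) * exp (-μ1 * t) := by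
    intro t ht
    have h := le_gronwallBound_of_hasDerivWithinAt_Ici (K := -μ1) (ε := θ1) hN le_rfl
      (fun s hs => by nlinarith [hIHnn s hs]) t ht
    rwa [sub_zero, gronwallBound_neg hμ1.ne'] at h
  refine ⟨decay, fun _ t ht => (decay t ht).trans (add_sub_mul_le_max (exp_pos _).le ?_)⟩
  exact exp_le_one_iff.2 (by nlinarith)

theorem human_population_decay
    (θ1 θ2 θ3 τ1 τ2 τ3 β1 β2 β3 μ1 μ2 μ3 μ4 σ1 σ2 σ3 κ1 κ2 κ3 γ γ1 γ2 γ3 ψ1 ψ2 ψ3 ρ1 ρ2 ρ3 ν1 ν2 ν3 C : ℝ)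
    (hθ1 : 0 < θ1)
    (hθ2 : 0 < θ2)
    (hθ3 : 0 < θ3)
    (hτ1 : 0 < τ1)
    (hτ2 : 0 < τ2)
    (hτ3 : 0 < τ3)
    (hβ1 : 0 < β1)
    (hβ2 : 0 < β2)
    (hβ3 : 0 < β3)
    (hμ1 : 0 < μ1)
    (hμ2 : 0 < μ2)
    (hμ3 : 0 < μ3)
    (hμ4 : 0 < μ4)
    (hσ1 : 0 < σ1)
    (hσ2 : 0 < σ2)
    (hσ3 : 0 < σ3)
    (hκ1 : 0 < κ1)
    (hκ2 : 0 < κ2)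
    (hκ3 : 0 < κ3)
    (hγ : 0 < γ)
    (hγ1 : 0 < γ1)
    (hγ2 : 0 < γ2)
    (hγ3 : 0 < γ3)
    (hψ1 : 0 < ψ1)
    (hψ2 : 0 < ψ2)
    (hψ3 : 0 < ψ3)
    (hρ1 : 0 < ρ1)
    (hρ2 : 0 < ρ2)
    (hρ3 : 0 < ρ3)
    (hν1 : 0 < ν1)
    (hν2 : 0 < ν2)
    (hν3 : 0 < ν3)
    (hC : 0 < C)
    (S_H E_H I_H R_H S_F E_F I_F S_D E_D I_D R_D M : ℝ → ℝ)
    (hodeSH : ∀ t ∈ Set.Ici (0:ℝ), HasDerivWithinAt S_H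
        (θ1 + β3 * R_H t - μ1 * S_H t - (τ1 * I_F t + τ2 * I_D t + τ3 * (M t / (M t + C))) * S_H t) (Set.Ici 0) t)
    (hodeEH : ∀ t ∈ Set.Ici (0:ℝ), HasDerivWithinAt E_H
        ((τ1 * I_F t + τ2 * I_D t + τ3 * (M t / (M t + C))) * S_H t - (μ1 + β1 + β2) * E_H t) (Set.Ici 0) t)
    (hodeIH : ∀ t ∈ Set.Ici (0:ℝ), HasDerivWithinAt I_H
        (β1 * E_H t - (σ1 + μ1) * I_H t) (Set.Ici 0) t)
    (hodeRH : ∀ t ∈ Set.Ici (0:ℝ), HasDerivWithinAt R_H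
        (β2 * E_H t - (β3 + μ1) * R_H t) (Set.Ici 0) t)
    (hodeSF : ∀ t ∈ Set.Ici (0:ℝ), HasDerivWithinAt S_F
        (θ2 - (κ1 * I_F t + κ2 * I_D t + κ3 * (M t / (M t + C))) * S_F t - μ2 * S_F t) (Set.Ici 0) t)
    (hodeEF : ∀ t ∈ Set.Ici (0:ℝ), HasDerivWithinAt E_F
        ((κ1 * I_F t + κ2 * I_D t + κ3 * (M t / (M t + C))) * S_F t - (μ2 + γ) * E_F t) (Set.Ici 0) t)
    (hodeIF : ∀ t ∈ Set.Ici (0:ℝ), HasDerivWithinAt I_F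
        (γ * E_F t - (μ2 + σ2) * I_F t) (Set.Ici 0) t)
    (hodeSD : ∀ t ∈ Set.Ici (0:ℝ), HasDerivWithinAt S_D
        (θ3 - μ3 * S_D t - (ψ1 * I_F t / (1 + ρ1) + ψ2 * I_D t / (1 + ρ2) + ψ3 * (M t / (M t + C)) / (1 + ρ3)) * S_D t + γ3 * R_D t) (Set.Ici 0) t)
    (hodeED : ∀ t ∈ Set.Ici (0:ℝ), HasDerivWithinAt E_D
        ((ψ1 * I_F t / (1 + ρ1) + ψ2 * I_D t / (1 + ρ2) + ψ3 * (M t / (M t + C)) / (1 + ρ3)) * S_D t - (μ3 + γ1 + γ2) * E_D t) (Set.Ici 0) t)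
    (hodeID : ∀ t ∈ Set.Ici (0:ℝ), HasDerivWithinAt I_D
        (γ1 * E_D t - (μ3 + σ3) * I_D t) (Set.Ici 0) t)
    (hodeRD : ∀ t ∈ Set.Ici (0:ℝ), HasDerivWithinAt R_D
        (γ2 * E_D t - (μ3 + γ3) * R_D t) (Set.Ici 0) t)
    (hodeM : ∀ t ∈ Set.Ici (0:ℝ), HasDerivWithinAt M
        (ν1 * I_H t + ν2 * I_F t + ν3 * I_D t - μ4 * M t) (Set.Ici 0) t)
    (hIHnn : ∀ t ≥ (0:ℝ), 0 ≤ I_H t) :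
    (∀ t ≥ (0:ℝ), S_H t + E_H t + I_H t + R_H t ≤
      θ1 / μ1 + (S_H 0 + E_H 0 + I_H 0 + R_H 0 - θ1 / μ1) * Real.exp (-μ1 * t)) ∧
    (0 ≤ S_H 0 + E_H 0 + I_H 0 + R_H 0 →
      ∀ t ≥ (0:ℝ), S_H t + E_H t + I_H t + R_H t ≤
        max (θ1 / μ1) (S_H 0 + E_H 0 + I_H 0 + R_H 0)) :=
  human_population_decay_general θ1 τ1 τ2 τ3 β1 β2 β3 μ1 σ1 C hμ1 hσ1 S_H E_H I_H R_H I_F I_D M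
    hodeSH hodeEH hodeIH hodeRH hIHnn
end
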